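/- The linear map i satisfies ⟨i(x), i(y)⟩ = 2⟨x,y⟩_T for all x,y ∈ V_T, and it maps the ℤ-span of the basis υ⁰, g_{jk}, υ into L. Moreover, for all B_T, ω ∈ H² and all t ∈ ℝ, setting B = ½·i(B_T) + ½·B_ℤ, the following identities hold in W ⊗ ℝ: (1) i( ω − ⟨B_T,ω⟩_T·υ ) = i(ω) − ⟨B, i(ω)⟩·v̂; (2) ½·i( υ⁰ + B_T + (t − ½⟨B_T,B_T⟩_T)·υ ) = v̂⁰ + B + ( t/2 − ½⟨B,B⟩ )·v̂. (Thus the orbifold conformal field theory of a torus theory with data (ω, B_T, V_T = t) has geometric interpretation with Kähler class π_*ω, volume t/2, and B-field B = ½π_*B_T + ½B_ℤ.) -/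

import Mathlib

noncomputable section

open scoped BigOperators

/-- `𝔽₂⁴`, the 4-dimensional vector space over the field with two elements. -/
abbrev F4 : Type := Fin 4 → ZMod 2

/-- `W_Π ⊗ ℝ`, with basis `(E_i)_{i ∈ 𝔽₂⁴}`. -/
abbrev WPiR : Type := F4 → ℝ

/-- The basis vectors `E_i`. -/
def EvecR (i : F4) : WPiR := Pi.single i 1

/-- The form on `W_Π ⊗ ℝ`: `⟨E_i,E_j⟩ = -2δ_{ij}`. -/
def formPiR : WPiR →ₗ[ℝ] WPiR →ₗ[ℝ] ℝ :=
  ∑ i : F4, (-2 : ℝ) • (LinearMap.mul ℝ ℝ).compl₁₂ (LinearMap.proj i) (LinearMap.proj i)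

/-- `W_K ⊗ ℝ`, with ordered basis `f_{12}, f_{13}, f_{14}, f_{23}, f_{24}, f_{34}`. -/
abbrev WKR : Type := Fin 6 → ℝ

/-- The basis vectors `f_{jk}`. -/
def fvecR (m : Fin 6) : WKR := Pi.single m 1

/-- Gram matrix on `W_K`: `⟨f_{12},f_{34}⟩ = 2`, `⟨f_{13},f_{24}⟩ = -2`, `⟨f_{14},f_{23}⟩ = 2`. -/
def gramKR : Fin 6 → Fin 6 → ℝ :=
  ![![0, 0, 0, 0, 0, 2], ![0, 0, 0, 0, -2, 0], ![0, 0, 0, 2, 0, 0],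
    ![0, 0, 2, 0, 0, 0], ![0, -2, 0, 0, 0, 0], ![2, 0, 0, 0, 0, 0]]

/-- The form on `W_K ⊗ ℝ`. -/
def formKR : WKR →ₗ[ℝ] WKR →ₗ[ℝ] ℝ :=
  ∑ m : Fin 6, ∑ m' : Fin 6,
    gramKR m m' • (LinearMap.mul ℝ ℝ).compl₁₂ (LinearMap.proj m) (LinearMap.proj m')

/-- `W_U ⊗ ℝ`: basis `u⁰ = (1,0)`, `u = (0,1)` with `⟨u⁰,u⁰⟩ = ⟨u,u⟩ = 0`, `⟨u⁰,u⟩ = 2`. -/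
abbrev WUR : Type := ℝ × ℝ

/-- The form on `W_U ⊗ ℝ`. -/
def formUR : WUR →ₗ[ℝ] WUR →ₗ[ℝ] ℝ :=
  (2 : ℝ) • ((LinearMap.mul ℝ ℝ).compl₁₂ (LinearMap.fst ℝ ℝ ℝ) (LinearMap.snd ℝ ℝ ℝ) +
    (LinearMap.mul ℝ ℝ).compl₁₂ (LinearMap.snd ℝ ℝ ℝ) (LinearMap.fst ℝ ℝ ℝ))

/-- `W ⊗ ℝ` where `W = W_K ⊕ W_Π ⊕ W_U` is the 24-dimensional space modelling
`H^{even}` of a Kummer surface. -/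
abbrev WR : Type := WKR × WPiR × WUR

/-- The orthogonal direct sum of the forms on the three summands of `W ⊗ ℝ`. -/
def formWR : WR →ₗ[ℝ] WR →ₗ[ℝ] ℝ :=
  formKR.compl₁₂ (LinearMap.fst ℝ WKR (WPiR × WUR)) (LinearMap.fst ℝ WKR (WPiR × WUR)) +
    formPiR.compl₁₂ ((LinearMap.fst ℝ WPiR WUR).comp (LinearMap.snd ℝ WKR (WPiR × WUR)))
      ((LinearMap.fst ℝ WPiR WUR).comp (LinearMap.snd ℝ WKR (WPiR × WUR))) +
    formUR.compl₁₂ ((LinearMap.snd ℝ WPiR WUR).comp (LinearMap.snd ℝ WKR (WPiR × WUR)))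
      ((LinearMap.snd ℝ WPiR WUR).comp (LinearMap.snd ℝ WKR (WPiR × WUR)))

/-- `u⁰ = π_*υ⁰`. -/
def u0R : WR := (0, 0, (1, 0))

/-- `u = π_*υ`. -/
def uR : WR := (0, 0, (0, 1))

/-- The classes `E_i` inside `W ⊗ ℝ`. -/
def EvecWR (i : F4) : WR := (0, EvecR i, 0)

/-- The classes `f_{jk}` inside `W ⊗ ℝ`. -/
def fvecWR (m : Fin 6) : WR := (fvecR m, 0, 0)

/-- `v̂ = u`. -/
def vhatR : WR := uR

/-- `v̂⁰ = ½u⁰ − ¼·∑_{i∈𝔽₂⁴} E_i + u`. -/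
def vhat0R : WR := ((1 : ℝ)/2) • u0R - ((1 : ℝ)/4) • (∑ i : F4, EvecWR i) + uR

/-- `Ê_i = E_i − ½u`. -/
def EhatR (i : F4) : WR := EvecWR i - ((1 : ℝ)/2) • uR

/-- The pair `(j,k)` (with `j < k`) corresponding to the index `m : Fin 6`. -/
def pairIdx : Fin 6 → Fin 4 × Fin 4 := ![(0, 1), (0, 2), (0, 3), (1, 2), (1, 3), (2, 3)]

open scoped Classical in
/-- `P_{jk} = {a ∈ 𝔽₂⁴ : a_l = 0 for all l ∉ {j,k}}` as a finite set. -/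
def Pfin (m : Fin 6) : Finset F4 :=
  Finset.univ.filter fun a => ∀ l : Fin 4, l ≠ (pairIdx m).1 → l ≠ (pairIdx m).2 → a l = 0

/-- The generators `½ f_{jk} + ½·∑_{i ∈ P_{jk}} Ê_{i+l}`. -/
def genJKR (m : Fin 6) (l : F4) : WR :=
  ((1 : ℝ)/2) • fvecWR m + ((1 : ℝ)/2) • ∑ i ∈ Pfin m, EhatR (i + l)

/-- The lattice `L ⊆ W ⊗ ℝ` generated by `v̂`, `v̂⁰`, the sixteen `Ê_i` and the
`½ f_{jk} + ½·∑_{i ∈ P_{jk}} Ê_{i+l}`. -/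
def LR : Submodule ℤ WR :=
  Submodule.span ℤ
    ({vhatR, vhat0R} ∪ Set.range EhatR ∪ {x | ∃ (m : Fin 6) (l : F4), x = genJKR m l})

/-- `V_T = H^{even}(T,ℝ)`, with coordinates `(a, g, c)` standing for
`a·υ⁰ + ∑ g_m·g_{jk(m)} + c·υ`. -/
abbrev VT : Type := ℝ × (Fin 6 → ℝ) × ℝ

/-- `υ⁰ ∈ V_T`. -/
def up0T : VT := (1, 0, 0)

/-- `υ ∈ V_T`. -/
def upT : VT := (0, 0, 1)

/-- The basis vectors `g_{jk}` of `H² ⊆ V_T`. -/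
def gvecT (m : Fin 6) : VT := (0, Pi.single m 1, 0)

/-- The generic element `∑ g_m·g_{jk(m)}` of `H² = span_ℝ{g_{jk}} ⊆ V_T`. -/
def H2vec (g : Fin 6 → ℝ) : VT := (0, g, 0)

/-- The intersection form `⟨·,·⟩_T` on `V_T`: `⟨υ⁰,υ⟩_T = 1`, `⟨g_{12},g_{34}⟩_T = 1`,
`⟨g_{13},g_{24}⟩_T = −1`, `⟨g_{14},g_{23}⟩_T = 1`, all other pairings `0`. -/
def formT : VT →ₗ[ℝ] VT →ₗ[ℝ] ℝ :=
  (LinearMap.mul ℝ ℝ).compl₁₂ (LinearMap.fst ℝ ℝ ((Fin 6 → ℝ) × ℝ))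
      ((LinearMap.snd ℝ (Fin 6 → ℝ) ℝ).comp (LinearMap.snd ℝ ℝ ((Fin 6 → ℝ) × ℝ))) +
    (LinearMap.mul ℝ ℝ).compl₁₂
      ((LinearMap.snd ℝ (Fin 6 → ℝ) ℝ).comp (LinearMap.snd ℝ ℝ ((Fin 6 → ℝ) × ℝ)))
      (LinearMap.fst ℝ ℝ ((Fin 6 → ℝ) × ℝ)) +
    ∑ m : Fin 6, ∑ m' : Fin 6, (gramKR m m' / 2) •
      (LinearMap.mul ℝ ℝ).compl₁₂
        ((LinearMap.proj m).comp ((LinearMap.fst ℝ (Fin 6 → ℝ) ℝ).comp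
          (LinearMap.snd ℝ ℝ ((Fin 6 → ℝ) × ℝ))))
        ((LinearMap.proj m').comp ((LinearMap.fst ℝ (Fin 6 → ℝ) ℝ).comp
          (LinearMap.snd ℝ ℝ ((Fin 6 → ℝ) × ℝ))))

/-- The map `i : V_T → W ⊗ ℝ` with `i(υ⁰) = u⁰`, `i(g_{jk}) = f_{jk}`, `i(υ) = u`
(modelling `π_*`). -/
def iT : VT →ₗ[ℝ] WR :=
  LinearMap.prod
    ((LinearMap.fst ℝ (Fin 6 → ℝ) ℝ).comp (LinearMap.snd ℝ ℝ ((Fin 6 → ℝ) × ℝ)))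
    (LinearMap.prod (0 : VT →ₗ[ℝ] WPiR)
      (LinearMap.prod (LinearMap.fst ℝ ℝ ((Fin 6 → ℝ) × ℝ))
        ((LinearMap.snd ℝ (Fin 6 → ℝ) ℝ).comp (LinearMap.snd ℝ ℝ ((Fin 6 → ℝ) × ℝ)))))

/-- `B_ℤ = ½·∑_{i∈𝔽₂⁴} Ê_i ∈ W ⊗ ℝ`. -/
def BzedR : WR := ((1 : ℝ)/2) • ∑ i : F4, EhatR i

/-!
The map `i` is a coordinate embedding, so the form identity is a coordinate computation.
With `B_ℤ = ½·∑ E_i − 4u`, the two identities reduce to `B_ℤ ⊥ i(H²)`, `⟨B_ℤ, B_ℤ⟩ = −8`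
and `u⁰ = 2v̂⁰ + B_ℤ + 2v̂`. The last relation also puts `i(υ⁰) = u⁰` in `L` once `B_ℤ ∈ L`:
since `𝔽₂⁴ = P₁₂ ⊕ P₃₄` (the Peirce decomposition for the idempotent indicator of `{1, 2}`),
summing the generators for `(j, k) = (1, 2)` over `l ∈ P₃₄` gives `2f₁₂ + B_ℤ`.
-/
theorem Finset.sum_sum_add_of_isIdempotentElem {R M : Type*} [CommRing R] [Fintype R]
    [DecidableEq R] [AddCommMonoid M] {e : R} (he : IsIdempotentElem e) (v : R → M) :
    ∑ y ∈ Finset.univ.filter (fun y => (1 - e) * y = y),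
      ∑ x ∈ Finset.univ.filter (fun x => e * x = x), v (x + y) = ∑ z, v z := by
  rw [← Finset.sum_product']
  refine Finset.sum_nbij' (fun p => p.2 + p.1) (fun z => ((1 - e) * z, e * z))
    (fun _ _ => Finset.mem_univ _) ?_ ?_ (fun z _ => by simp [sub_mul]) (fun _ _ => rfl)
  · intro z _
    simp [← mul_assoc, he.eq, he.one_sub.eq]
  · rintro ⟨y, x⟩ hp
    simp only [Finset.mem_product, Finset.mem_filter, Finset.mem_univ, true_and] at hp
    obtain ⟨hy, hx⟩ := hp
    have hex : e * y = 0 := by rw [← hy, ← mul_assoc, he.mul_one_sub_self, zero_mul]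
    have hfx : (1 - e) * x = 0 := by
      rw [← hx, ← mul_assoc, mul_comm (1 - e), he.mul_one_sub_self, zero_mul]
    simp [mul_add, hy, hx, hex, hfx]

lemma formKR_apply (x y : WKR) :
    formKR x y = ∑ m : Fin 6, ∑ m' : Fin 6, gramKR m m' * (x m * y m') := by
  simp [formKR]

lemma formPiR_apply (x y : WPiR) : formPiR x y = -2 * ∑ i, x i * y i := by
  simp [formPiR, Finset.mul_sum]

lemma formUR_apply (x y : WUR) : formUR x y = 2 * (x.1 * y.2 + x.2 * y.1) := by
  simp [formUR, mul_add]

lemma formWR_apply (x y : WR) :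
    formWR x y = formKR x.1 y.1 + formPiR x.2.1 y.2.1 + formUR x.2.2 y.2.2 := rfl

lemma formT_apply (x y : VT) :
    formT x y = x.1 * y.2.2 + x.2.2 * y.1 + formKR x.2.1 y.2.1 / 2 := by
  simp [formT, formKR_apply, Finset.sum_div, div_mul_eq_mul_div]

lemma iT_apply (x : VT) : iT x = (x.2.1, 0, (x.1, x.2.2)) := rfl

lemma formWR_iT_iT (x y : VT) : formWR (iT x) (iT y) = 2 * formT x y := by
  rw [iT_apply, iT_apply, formWR_apply, formT_apply, formUR_apply]
  simp only [map_zero]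
  ring

lemma formWR_eq_zero_of_fst_eq_zero_of_snd_eq_zero {x y : WR} (hx : x.1 = 0) (hy : y.2 = 0) :
    formWR x y = 0 := by
  simp [formWR_apply, hx, hy]

lemma formWR_eq_zero_of_snd_eq_zero_of_fst_eq_zero {x y : WR} (hx : x.2 = 0) (hy : y.1 = 0) :
    formWR x y = 0 := by
  simp [formWR_apply, hx, hy]

lemma BzedR_eq : BzedR = (0, fun _ => 1/2, (0, -4)) := by
  ext <;> norm_num [BzedR, EhatR, EvecWR, EvecR, uR, Prod.fst_sum, Prod.snd_sum,
    Finset.sum_apply, Pi.single_apply]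

lemma formWR_BzedR_BzedR : formWR BzedR BzedR = -8 := by
  rw [BzedR_eq, formWR_apply, formPiR_apply, formUR_apply]
  norm_num

lemma vhatR_mem_LR : vhatR ∈ LR := Submodule.subset_span (by simp)

lemma vhat0R_mem_LR : vhat0R ∈ LR := Submodule.subset_span (by simp)

lemma EhatR_mem_LR (i : F4) : EhatR i ∈ LR := Submodule.subset_span (by simp)

lemma genJKR_mem_LR (m : Fin 6) (l : F4) : genJKR m l ∈ LR :=
  Submodule.subset_span (Or.inr ⟨m, l, rfl⟩)

lemma fvecWR_mem_LR (m : Fin 6) : fvecWR m ∈ LR := by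
  have h : fvecWR m = (2 : ℤ) • genJKR m 0 - ∑ i ∈ Pfin m, EhatR i := by
    simp only [genJKR, add_zero]
    module
  rw [h]
  exact sub_mem (Submodule.smul_mem _ _ (genJKR_mem_LR m 0))
    (Submodule.sum_mem _ fun i _ => EhatR_mem_LR i)

def pairMask (m : Fin 6) : F4 := fun l => if l = (pairIdx m).1 ∨ l = (pairIdx m).2 then 1 else 0

lemma isIdempotentElem_pairMask (m : Fin 6) : IsIdempotentElem (pairMask m) := by
  funext l
  simp only [Pi.mul_apply, pairMask]
  split_ifs <;> simp

lemma Pfin_eq_filter (m : Fin 6) : Pfin m = Finset.univ.filter (fun a => pairMask m * a = a) := by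
  ext a
  simp only [Pfin, Finset.mem_filter, Finset.mem_univ, true_and, funext_iff, Pi.mul_apply,
    pairMask]
  refine forall_congr' fun l => ?_
  split_ifs with h
  · simp only [one_mul, iff_true]
    tauto
  · simp only [not_or] at h
    simp [h.1, h.2, eq_comm]

lemma one_sub_pairMask_zero : 1 - pairMask 0 = pairMask 5 := by decide

lemma card_Pfin_five : (Pfin 5).card = 4 := by
  rw [Pfin_eq_filter]
  decide

lemma BzedR_mem_LR : BzedR ∈ LR := by
  have hsum : ∑ l ∈ Pfin 5, ∑ i ∈ Pfin 0, EhatR (i + l) = ∑ j, EhatR j := by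
    rw [Pfin_eq_filter 5, ← one_sub_pairMask_zero, Pfin_eq_filter]
    exact Finset.sum_sum_add_of_isIdempotentElem (isIdempotentElem_pairMask 0) EhatR
  have h : BzedR = ∑ l ∈ Pfin 5, genJKR 0 l - (2 : ℤ) • fvecWR 0 := by
    simp only [genJKR, Finset.sum_add_distrib, Finset.sum_const, card_Pfin_five,
      ← Finset.smul_sum, hsum, BzedR]
    module
  rw [h]
  exact sub_mem (Submodule.sum_mem _ fun l _ => genJKR_mem_LR 0 l)
    (Submodule.smul_mem _ _ (fvecWR_mem_LR 0))

lemma u0R_eq : u0R = (2 : ℤ) • vhat0R + BzedR + (2 : ℤ) • vhatR := by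
  rw [BzedR_eq]
  ext <;> norm_num [vhat0R, u0R, uR, vhatR, EvecWR, EvecR, Prod.fst_sum, Prod.snd_sum,
    Finset.sum_apply, Pi.single_apply]

lemma u0R_mem_LR : u0R ∈ LR := by
  rw [u0R_eq]
  exact add_mem (add_mem (Submodule.smul_mem _ _ vhat0R_mem_LR) BzedR_mem_LR)
    (Submodule.smul_mem _ _ vhatR_mem_LR)

lemma iT_mem_LR_of_mem_span {x : VT}
    (hx : x ∈ Submodule.span ℤ ({up0T, upT} ∪ Set.range gvecT : Set VT)) : iT x ∈ LR := by
  suffices h : Submodule.span ℤ ({up0T, upT} ∪ Set.range gvecT : Set VT) ≤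
      LR.comap (iT.restrictScalars ℤ) from h hx
  rw [Submodule.span_le]
  rintro y ((rfl | rfl) | ⟨m, rfl⟩)
  · exact u0R_mem_LR
  · exact vhatR_mem_LR
  · exact fvecWR_mem_LR m

def bField (BT : VT) : WR := ((1 : ℝ)/2) • iT BT + ((1 : ℝ)/2) • BzedR

lemma iT_H2vec_snd (g : Fin 6 → ℝ) : (iT (H2vec g)).2 = 0 := rfl

lemma formWR_bField_iT_H2vec (Bg ωg : Fin 6 → ℝ) :
    formWR (bField (H2vec Bg)) (iT (H2vec ωg)) = formT (H2vec Bg) (H2vec ωg) := by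
  have hBz : formWR BzedR (iT (H2vec ωg)) = 0 :=
    formWR_eq_zero_of_fst_eq_zero_of_snd_eq_zero (by rw [BzedR_eq]) (iT_H2vec_snd ωg)
  simp only [bField, map_add, map_smul, LinearMap.add_apply, LinearMap.smul_apply, smul_eq_mul,
    formWR_iT_iT, hBz]
  ring

lemma formWR_bField_bField (Bg : Fin 6 → ℝ) :
    formWR (bField (H2vec Bg)) (bField (H2vec Bg)) = (1/2) * formT (H2vec Bg) (H2vec Bg) - 2 := by
  have h₁ : formWR BzedR (iT (H2vec Bg)) = 0 :=
    formWR_eq_zero_of_fst_eq_zero_of_snd_eq_zero (by rw [BzedR_eq]) (iT_H2vec_snd Bg)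
  have h₂ : formWR (iT (H2vec Bg)) BzedR = 0 :=
    formWR_eq_zero_of_snd_eq_zero_of_fst_eq_zero (iT_H2vec_snd Bg) (by rw [BzedR_eq])
  simp only [bField, map_add, map_smul, LinearMap.add_apply, LinearMap.smul_apply, smul_eq_mul,
    formWR_iT_iT, h₁, h₂, formWR_BzedR_BzedR]
  ring

/-- The map `i` satisfies `⟨i(x),i(y)⟩ = 2⟨x,y⟩_T`, maps the ℤ-span of
the basis `υ⁰, g_{jk}, υ` into `L`, and, setting `B = ½·i(B_T) + ½·B_ℤ`, satisfies the
two identities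
`i(ω − ⟨B_T,ω⟩_T·υ) = i(ω) − ⟨B,i(ω)⟩·v̂` and
`½·i(υ⁰ + B_T + (t − ½⟨B_T,B_T⟩_T)·υ) = v̂⁰ + B + (t/2 − ½⟨B,B⟩)·v̂`
for all `B_T, ω ∈ H²` and `t ∈ ℝ`. -/
theorem stmt7 :
    (∀ x y : VT, formWR (iT x) (iT y) = 2 * formT x y) ∧
    (∀ x ∈ Submodule.span ℤ ({up0T, upT} ∪ Set.range gvecT : Set VT), iT x ∈ LR) ∧
    (∀ Bg ωg : Fin 6 → ℝ, ∀ t : ℝ,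
      ∀ BT ω : VT, BT = H2vec Bg → ω = H2vec ωg →
      ∀ B : WR, B = ((1 : ℝ)/2) • iT BT + ((1 : ℝ)/2) • BzedR →
      iT (ω - (formT BT ω) • upT) = iT ω - (formWR B (iT ω)) • vhatR ∧
      ((1 : ℝ)/2) • iT (up0T + BT + (t - (1/2 : ℝ) * formT BT BT) • upT) =
        vhat0R + B + (t/2 - (1/2 : ℝ) * formWR B B) • vhatR) := by
  refine ⟨formWR_iT_iT, fun x => iT_mem_LR_of_mem_span, ?_⟩
  rintro Bg ωg t BT ω rfl rfl B rfl
  have hu : iT upT = vhatR := rfl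
  have hu0 : iT up0T = u0R := rfl
  refine ⟨?_, ?_⟩
  · rw [map_sub, map_smul, hu, ← bField, formWR_bField_iT_H2vec]
  · rw [← bField, formWR_bField_bField, map_add, map_add, map_smul, hu, hu0, u0R_eq, bField]
    module
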